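/- All-minors Matrix Tree Theorem: For a connected graph G = (N, E) with positive edge weights, reduced weighted Laplacian L̄ (the Laplacian with n-th row and column deleted), and any indices i, j ∈ {1, …, n−1}, the matrix L̄^{ij} obtained from L̄ by deleting its i-th row and j-th column satisfies det(L̄^{ij}) = (−1)^{i+j} Σ_{F ∈ T(ij, n)} β(F), where T(ij, n) is the set of spanning forests of G consisting of exactly two vertex-disjoint trees, one containing both i and j and the other containing node n. -/

import Mathlib

/-!
Write `C_r` for the incidence matrix with the rows of the node `r` and of the reference node
deleted. The minor `L̄^{ij}` factors as `C_i * diag B * C_jᵀ`, so by Cauchy–Binet its determinant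
is the sum over edge sets `S` of the right size of `β(S) * det C_i[S] * det C_j[S]`.

If `det C_r[S] ≠ 0`, every node is joined through `S` to `r` or to the reference node: otherwise
the indicator of a component missing both lies in the left kernel of `C_r[S]`. These two roots are
not joined to each other, since a spanning tree needs one edge more than `S` has. Hence the product
of the two minors vanishes unless `S` is a two-tree forest separating `{i, j}` from the reference
node. For such a forest each minor is `±1`: matching every non-root node with the edge towards its
root makes `C_r[S]` triangular for the order by height. The signs are tied together by the signed
maximal minors `(-1)^r det C_r[S]`, which form a vector in the left kernel of the incidence matrix
and are therefore constant on the tree containing `i` and `j`.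
-/

open Matrix Finset

variable {n m : ℕ}

/-- Nodes `a` and `b` are joined by some edge in the edge set `S`. -/
def edgeAdj (src tgt : Fin m → Fin (n + 1)) (S : Finset (Fin m)) (a b : Fin (n + 1)) : Prop :=
  ∃ e ∈ S, (src e = a ∧ tgt e = b) ∨ (src e = b ∧ tgt e = a)

/-- The spanning subgraph with edge set `S` is connected. -/
def ConnectedOn (src tgt : Fin m → Fin (n + 1)) (S : Finset (Fin m)) : Prop :=
  ∀ a b : Fin (n + 1), Relation.ReflTransGen (edgeAdj src tgt S) a b

/-- `F` is the edge set of a spanning tree of the graph on `n + 1` nodes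
(a connected spanning subgraph with exactly `n` edges). -/
def IsSpanningTree (src tgt : Fin m → Fin (n + 1)) (F : Finset (Fin m)) : Prop :=
  F.card = n ∧ ConnectedOn src tgt F

/-- Connectivity within the vertex set `V`, using only edges of `S` traversed inside `V`. -/
def ConnWithin (src tgt : Fin m → Fin (n + 1)) (S : Finset (Fin m))
    (V : Finset (Fin (n + 1))) : Prop :=
  ∀ a ∈ V, ∀ b ∈ V,
    Relation.ReflTransGen (fun x y => x ∈ V ∧ y ∈ V ∧ edgeAdj src tgt S x y) a b

/-- `F` is a spanning forest of exactly two vertex-disjoint trees, one containing all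
nodes in `N1` and the other containing all nodes in `N2`. -/
def IsSpanningForest2 (src tgt : Fin m → Fin (n + 1)) (F : Finset (Fin m))
    (N1 N2 : Finset (Fin (n + 1))) : Prop :=
  ∃ V1 V2 : Finset (Fin (n + 1)),
    Disjoint V1 V2 ∧ V1 ∪ V2 = Finset.univ ∧ V1.Nonempty ∧ V2.Nonempty ∧
      N1 ⊆ V1 ∧ N2 ⊆ V2 ∧ F.card + 1 = n ∧
      (∀ e ∈ F, (src e ∈ V1 ∧ tgt e ∈ V1) ∨ (src e ∈ V2 ∧ tgt e ∈ V2)) ∧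
      ConnWithin src tgt F V1 ∧ ConnWithin src tgt F V2

/-- The (signed) incidence matrix `C`. -/
def incMat (src tgt : Fin m → Fin (n + 1)) : Matrix (Fin (n + 1)) (Fin m) ℝ :=
  Matrix.of fun i e => if src e = i then 1 else if tgt e = i then -1 else 0

/-- The weighted Laplacian `L = C ⬝ diag B ⬝ Cᵀ`. -/
noncomputable def lap (src tgt : Fin m → Fin (n + 1)) (B : Fin m → ℝ) :
    Matrix (Fin (n + 1)) (Fin (n + 1)) ℝ :=
  incMat src tgt * Matrix.diagonal B * (incMat src tgt)ᵀ

/-- The reduced Laplacian: delete the row and column of the reference node `Fin.last n`. -/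
noncomputable def rlap (src tgt : Fin m → Fin (n + 1)) (B : Fin m → ℝ) :
    Matrix (Fin n) (Fin n) ℝ :=
  (lap src tgt B).submatrix Fin.castSucc Fin.castSucc

/-- The inverse of the reduced Laplacian, padded with a zero row and column at the
reference node. -/
noncomputable def Amat (src tgt : Fin m → Fin (n + 1)) (B : Fin m → ℝ) :
    Matrix (Fin (n + 1)) (Fin (n + 1)) ℝ :=
  Matrix.of fun i j =>
    if hi : i = Fin.last n then 0
    else if hj : j = Fin.last n then 0
    else (rlap src tgt B)⁻¹ (i.castPred hi) (j.castPred hj)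

open Classical in
/-- `Σ_{F ∈ T_E} β(F)`: total weight of all spanning trees. -/
noncomputable def treeSum (src tgt : Fin m → Fin (n + 1)) (B : Fin m → ℝ) : ℝ :=
  ∑ F ∈ Finset.univ.filter (fun F => IsSpanningTree src tgt F), ∏ e ∈ F, B e

open Classical in
/-- `Σ_{F ∈ T_{−l}} β(F)`: total weight of all spanning trees avoiding the edge `l`. -/
noncomputable def treeSumAvoiding (src tgt : Fin m → Fin (n + 1)) (B : Fin m → ℝ)
    (l : Fin m) : ℝ :=
  ∑ F ∈ Finset.univ.filter (fun F => IsSpanningTree src tgt F ∧ l ∉ F), ∏ e ∈ F, B e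

open Classical in
/-- `Σ_{F ∈ T(N1, N2)} β(F)`: total weight of two-tree spanning forests separating
`N1` from `N2`. -/
noncomputable def forestSum (src tgt : Fin m → Fin (n + 1)) (B : Fin m → ℝ)
    (N1 N2 : Finset (Fin (n + 1))) : ℝ :=
  ∑ F ∈ Finset.univ.filter (fun F => IsSpanningForest2 src tgt F N1 N2), ∏ e ∈ F, B e

/-- The power transfer distribution factor `D_{l, î ĵ}`. -/
noncomputable def ptdf (src tgt : Fin m → Fin (n + 1)) (B : Fin m → ℝ) (l : Fin m)
    (ihat jhat : Fin (n + 1)) : ℝ :=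
  B l * (Amat src tgt B (src l) ihat + Amat src tgt B (tgt l) jhat
    - Amat src tgt B (src l) jhat - Amat src tgt B (tgt l) ihat)

/-- An edge is a bridge if its removal disconnects the graph. -/
def IsBridge (src tgt : Fin m → Fin (n + 1)) (l : Fin m) : Prop :=
  ¬ ConnectedOn src tgt (Finset.univ.erase l)

/-- There is a simple cycle (distinct edges, distinct vertices) containing both edges
`l` and `lhat`. -/
def ExistsSimpleCycleThrough (src tgt : Fin m → Fin (n + 1)) (l lhat : Fin m) : Prop :=
  ∃ (k : ℕ) (es : Fin (k + 2) → Fin m) (vs : Fin (k + 2) → Fin (n + 1)),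
    Function.Injective es ∧ Function.Injective vs ∧
      (∀ t, (src (es t) = vs t ∧ tgt (es t) = vs (t + 1)) ∨
        (src (es t) = vs (t + 1) ∧ tgt (es t) = vs t)) ∧
      (∃ t, es t = l) ∧ (∃ t, es t = lhat)

/-- The incidence submatrix `C_{−F}` on the surviving edges. -/
def Cminus (src tgt : Fin m → Fin (n + 1)) (F : Finset (Fin m)) :
    Matrix (Fin (n + 1)) {e : Fin m // e ∉ F} ℝ :=
  (incMat src tgt).submatrix id (fun e => e.val)

/-- The incidence submatrix `C_F` on the removed edges. -/
def Cof (src tgt : Fin m → Fin (n + 1)) (F : Finset (Fin m)) :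
    Matrix (Fin (n + 1)) {e : Fin m // e ∈ F} ℝ :=
  (incMat src tgt).submatrix id (fun e => e.val)

/-- The diagonal susceptance submatrix `B_{−F}` on the surviving edges. -/
noncomputable def Bminus (B : Fin m → ℝ) (F : Finset (Fin m)) :
    Matrix {e : Fin m // e ∉ F} {e : Fin m // e ∉ F} ℝ :=
  Matrix.diagonal fun e => B e.val

/-- The diagonal susceptance submatrix `B_F` on the removed edges. -/
noncomputable def Bof (B : Fin m → ℝ) (F : Finset (Fin m)) :
    Matrix {e : Fin m // e ∈ F} {e : Fin m // e ∈ F} ℝ :=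
  Matrix.diagonal fun e => B e.val

/-- The post-contingency Laplacian `L_{−F} = C_{−F} ⬝ B_{−F} ⬝ C_{−F}ᵀ`. -/
noncomputable def lapMinus (src tgt : Fin m → Fin (n + 1)) (B : Fin m → ℝ)
    (F : Finset (Fin m)) : Matrix (Fin (n + 1)) (Fin (n + 1)) ℝ :=
  Cminus src tgt F * Bminus B F * (Cminus src tgt F)ᵀ

/-- The padded inverse `A_{−F}` of the post-contingency reduced Laplacian. -/
noncomputable def AmatMinus (src tgt : Fin m → Fin (n + 1)) (B : Fin m → ℝ)
    (F : Finset (Fin m)) : Matrix (Fin (n + 1)) (Fin (n + 1)) ℝ :=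
  Matrix.of fun i j =>
    if hi : i = Fin.last n then 0
    else if hj : j = Fin.last n then 0
    else ((lapMinus src tgt B F).submatrix Fin.castSucc Fin.castSucc)⁻¹
      (i.castPred hi) (j.castPred hj)

/-- The pre-contingency branch flow vector `f = diag(B) ⬝ Cᵀ ⬝ A ⬝ p`. -/
noncomputable def flowPre (src tgt : Fin m → Fin (n + 1)) (B : Fin m → ℝ)
    (p : Fin (n + 1) → ℝ) : Fin m → ℝ :=
  (Matrix.diagonal B * (incMat src tgt)ᵀ * Amat src tgt B) *ᵥ p

/-- The post-contingency branch flow vector `f̃_{−F} = B_{−F} ⬝ C_{−F}ᵀ ⬝ A_{−F} ⬝ p`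
on the surviving edges. -/
noncomputable def flowPost (src tgt : Fin m → Fin (n + 1)) (B : Fin m → ℝ)
    (F : Finset (Fin m)) (p : Fin (n + 1) → ℝ) : {e : Fin m // e ∉ F} → ℝ :=
  (Bminus B F * (Cminus src tgt F)ᵀ * AmatMinus src tgt B F) *ᵥ p

/-- The generalized line outage distribution factor matrix
`K^F = B_{−F} ⬝ C_{−F}ᵀ ⬝ A_{−F} ⬝ C_F`. -/
noncomputable def glodf (src tgt : Fin m → Fin (n + 1)) (B : Fin m → ℝ)
    (F : Finset (Fin m)) : Matrix {e : Fin m // e ∉ F} {e : Fin m // e ∈ F} ℝ :=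
  Bminus B F * (Cminus src tgt F)ᵀ * AmatMinus src tgt B F * Cof src tgt F

/-- The PTDF submatrix `D_{FF} = B_F ⬝ C_Fᵀ ⬝ A ⬝ C_F`. -/
noncomputable def Dff (src tgt : Fin m → Fin (n + 1)) (B : Fin m → ℝ)
    (F : Finset (Fin m)) : Matrix {e : Fin m // e ∈ F} {e : Fin m // e ∈ F} ℝ :=
  Bof B F * (Cof src tgt F)ᵀ * Amat src tgt B * Cof src tgt F

/-- The PTDF submatrix `D_{−FF} = B_{−F} ⬝ C_{−F}ᵀ ⬝ A ⬝ C_F`. -/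
noncomputable def DmFF (src tgt : Fin m → Fin (n + 1)) (B : Fin m → ℝ)
    (F : Finset (Fin m)) : Matrix {e : Fin m // e ∉ F} {e : Fin m // e ∈ F} ℝ :=
  Bminus B F * (Cminus src tgt F)ᵀ * Amat src tgt B * Cof src tgt F

open Equiv

theorem Finset.sum_injective_eq_sum_orderEmbOfFin_comp_perm {ι M : Type*} [Fintype ι]
    [LinearOrder ι] [AddCommMonoid M] {k : ℕ} (F : (Fin k → ι) → M) :
    ∑ p : Fin k → ι with Function.Injective p, F p
      = ∑ S : Finset ι, if h : #S = k then ∑ σ : Perm (Fin k), F (S.orderEmbOfFin h ∘ σ)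
          else 0 := by
  classical
  rw [← sum_fiberwise (g := fun p => univ.image p)]
  refine sum_congr rfl fun S _ => ?_
  split_ifs with h
  · set e := S.orderEmbOfFin h
    refine (sum_bij (s := (univ : Finset (Perm (Fin k)))) (fun σ _ => (e ∘ σ : Fin k → ι))
      (fun σ _ => ?_) (fun σ _ τ _ hστ => ?_) (fun p hp => ?_) fun _ _ => rfl).symm
    · have hinj : Function.Injective (e ∘ σ) := e.injective.comp σ.injective
      refine mem_filter.2 ⟨mem_filter.2 ⟨mem_univ _, hinj⟩, ?_⟩
      rw [← image_image, image_univ_equiv, image_orderEmbOfFin_univ]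
    · exact Equiv.ext fun a => e.injective (congrFun hστ a)
    · simp only [mem_filter, mem_univ, true_and] at hp
      have hmem : ∀ a, p a ∈ Set.range e := fun a => by
        rw [range_orderEmbOfFin, ← hp.2]
        simp
      choose σ hσ using hmem
      have hσinj : Function.Injective σ := fun a b hab => hp.1 (by rw [← hσ a, ← hσ b, hab])
      exact ⟨Equiv.ofBijective σ (Finite.injective_iff_bijective.mp hσinj), mem_univ _,
        funext hσ⟩
  · refine sum_eq_zero fun p hp => absurd ?_ h
    simp only [mem_filter, mem_univ, true_and] at hp
    rw [← hp.2, card_image_of_injective _ hp.1, card_univ, Fintype.card_fin]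

namespace Matrix

variable {R ι : Type*} [CommRing R] {k : ℕ}

theorem det_mul_eq_sum_prod_mul_det_submatrix [Fintype ι] [DecidableEq ι]
    (X : Matrix (Fin k) ι R) (Y : Matrix ι (Fin k) R) :
    det (X * Y) = ∑ p : Fin k → ι, (∏ a, Y (p a) a) * det (X.submatrix id p) := by
  simp only [det_apply', mul_apply, prod_univ_sum, mul_sum, Fintype.piFinset_univ,
    submatrix_apply, id, prod_mul_distrib]
  rw [sum_comm]
  exact sum_congr rfl fun p _ => sum_congr rfl fun σ _ => by ring

theorem det_submatrix_id_eq_zero_of_not_injective {X : Matrix (Fin k) ι R} {p : Fin k → ι}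
    (hp : ¬ Function.Injective p) : det (X.submatrix id p) = 0 := by
  obtain ⟨a, b, hab, hne⟩ : ∃ a b, p a = p b ∧ a ≠ b := by
    simpa [Function.Injective] using hp
  exact det_zero_of_column_eq hne fun c => by simp [hab]

theorem det_mul_eq_sum_det_submatrix_mul_det_submatrix [Fintype ι] [LinearOrder ι]
    (X : Matrix (Fin k) ι R) (Y : Matrix ι (Fin k) R) :
    det (X * Y) = ∑ S : Finset ι, if h : #S = k then
      det (X.submatrix id (S.orderEmbOfFin h)) * det (Y.submatrix (S.orderEmbOfFin h) id)
      else 0 := by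
  rw [det_mul_eq_sum_prod_mul_det_submatrix, ← sum_filter_of_ne fun p _ hp =>
    not_not.1 fun hinj => hp (by rw [det_submatrix_id_eq_zero_of_not_injective hinj, mul_zero]),
    sum_injective_eq_sum_orderEmbOfFin_comp_perm]
  refine sum_congr rfl fun S _ => dite_congr rfl (fun h => ?_) fun _ => rfl
  set e := S.orderEmbOfFin h
  calc ∑ σ : Perm (Fin k), (∏ a, Y ((e ∘ σ) a) a) * det (X.submatrix id (e ∘ σ))
      = ∑ σ : Perm (Fin k), det (X.submatrix id e) * (Perm.sign σ * ∏ a, Y (e (σ a)) a) := by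
        refine sum_congr rfl fun σ _ => ?_
        rw [show X.submatrix id (e ∘ σ) = (X.submatrix id e).submatrix id σ from rfl,
          det_permute']
        simp only [Function.comp_apply]
        ring
    _ = det (X.submatrix id e) * det (Y.submatrix e id) := by
        rw [← mul_sum, det_apply' (Y.submatrix e id)]
        rfl

theorem det_mul_diagonal_mul_transpose_eq_sum [Fintype ι] [LinearOrder ι]
    (X Y : Matrix (Fin k) ι R) (w : ι → R) :
    det (X * diagonal w * Yᵀ) = ∑ S : Finset ι, if h : #S = k then
      (∏ e ∈ S, w e) * det (X.submatrix id (S.orderEmbOfFin h))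
        * det (Y.submatrix id (S.orderEmbOfFin h))
      else 0 := by
  rw [det_mul_eq_sum_det_submatrix_mul_det_submatrix]
  refine sum_congr rfl fun S _ => dite_congr rfl (fun h => ?_) fun _ => rfl
  set e := S.orderEmbOfFin h
  have hprod : ∏ e ∈ S, w e = ∏ a, w (e a) := by
    conv_lhs => rw [← image_orderEmbOfFin_univ S h]
    exact prod_image fun a _ b _ hab => e.injective hab
  have hX : (X * diagonal w).submatrix id e = X.submatrix id e * diagonal (fun a => w (e a)) := by
    ext a b
    simp [mul_diagonal]
  rw [hX, ← transpose_submatrix, det_transpose, det_mul, det_diagonal, hprod]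
  ring

theorem det_eq_prod_diag_of_offDiag_lt [Fintype ι] [DecidableEq ι] (M : Matrix ι ι R)
    (f : ι → ℕ) (hM : ∀ a b, a ≠ b → M a b ≠ 0 → f a < f b) : M.det = ∏ a, M a a := by
  rw [det_apply', sum_eq_single 1 (fun σ _ hσ => ?_) (by simp)]
  · simp
  obtain ⟨a, ha⟩ : ∃ a, σ a ≠ a := by
    by_contra! h
    exact hσ (Equiv.ext h)
  -- a permutation moving `a` with all `M (σ b) b ≠ 0` would strictly decrease `∑ b, f b`
  refine mul_eq_zero_of_right _ ?_
  by_cases hz : ∃ b, M (σ b) b = 0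
  · obtain ⟨b, hb⟩ := hz
    exact prod_eq_zero (mem_univ b) hb
  push Not at hz
  have hle : ∀ b, f (σ b) ≤ f b := fun b => by
    rcases eq_or_ne (σ b) b with hb | hb
    · rw [hb]
    · exact (hM _ _ hb (hz b)).le
  have hlt : ∑ b, f (σ b) < ∑ b, f b :=
    sum_lt_sum (fun b _ => hle b) ⟨a, mem_univ _, hM _ _ ha (hz a)⟩
  rw [Equiv.sum_comp σ f] at hlt
  exact (lt_irrefl _ hlt).elim

theorem sum_neg_one_pow_mul_det_submatrix_succAbove_mul_eq_zero {k : ℕ}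
    (M : Matrix (Fin (k + 1)) (Fin k) R) (c : Fin k) :
    ∑ r : Fin (k + 1), (-1) ^ (r : ℕ) * det (M.submatrix r.succAbove id) * M r c = 0 := by
  -- Laplace expansion along column `0` of `[M_c | M]`, which has a repeated column.
  let Q : Matrix (Fin (k + 1)) (Fin (k + 1)) R := of fun p => Fin.cons (M p c) (M p)
  have hQ : det Q = 0 := det_zero_of_column_eq (Fin.succ_ne_zero c).symm fun p => by simp [Q]
  rw [det_succ_column_zero] at hQ
  rw [← hQ]
  refine sum_congr rfl fun r _ => ?_
  have hsub : Q.submatrix r.succAbove Fin.succ = M.submatrix r.succAbove id := by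
    ext; simp [Q]
  simp only [hsub, Q, of_apply, Fin.cons_zero]
  ring

end Matrix

namespace Relation

variable {α : Type*}

def ReachesIn (r : α → α → Prop) (P : α → Prop) : ℕ → α → Prop
  | 0, a => P a
  | k + 1, a => ∃ c, r a c ∧ ReachesIn r P k c

theorem exists_height_of_forall_reflTransGen {r : α → α → Prop} {P : α → Prop}
    (h : ∀ a, ∃ b, P b ∧ ReflTransGen r a b) :
    ∃ ht : α → ℕ, ∀ a, ¬ P a → ∃ c, r a c ∧ ht c < ht a := by
  classical
  have hex : ∀ a, ∃ k, ReachesIn r P k a := fun a => by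
    obtain ⟨b, hb, hab⟩ := h a
    induction hab using ReflTransGen.head_induction_on with
    | refl => exact ⟨0, hb⟩
    | head hac _ ih =>
      obtain ⟨k, hk⟩ := ih
      exact ⟨k + 1, _, hac, hk⟩
  refine ⟨fun a => Nat.find (hex a), fun a ha => ?_⟩
  have hspec := Nat.find_spec (hex a)
  rcases hk : Nat.find (hex a) with _ | k
  · rw [hk] at hspec
    exact absurd hspec ha
  · rw [hk] at hspec
    obtain ⟨c, hac, hc⟩ := hspec
    refine ⟨c, hac, ?_⟩
    show Nat.find (hex c) < Nat.find (hex a)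
    rw [hk]
    exact Nat.lt_succ_of_le (Nat.find_le hc)

end Relation

open Relation

section Incidence

variable {src tgt : Fin m → Fin (n + 1)}

theorem incMat_ne_zero_iff {v : Fin (n + 1)} {e : Fin m} :
    incMat src tgt v e ≠ 0 ↔ src e = v ∨ tgt e = v := by
  simp only [incMat, of_apply]
  split_ifs <;> simp_all

theorem incMat_sq_of_ne_zero {v : Fin (n + 1)} {e : Fin m} (h : incMat src tgt v e ≠ 0) :
    incMat src tgt v e ^ 2 = 1 := by
  simp only [incMat, of_apply] at *
  split_ifs at * <;> simp_all

theorem sum_mul_incMat {e : Fin m} (he : src e ≠ tgt e) (g : Fin (n + 1) → ℝ) :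
    ∑ v, g v * incMat src tgt v e = g (src e) - g (tgt e) := by
  have hcol : ∀ v, incMat src tgt v e
      = (if src e = v then 1 else 0) - (if tgt e = v then 1 else 0) := fun v => by
    simp only [incMat, of_apply]
    split_ifs <;> simp_all
  simp only [hcol, mul_sub, mul_ite, mul_one, mul_zero, sum_sub_distrib, sum_ite_eq, mem_univ,
    if_true]

theorem edgeAdj_of_mem {S : Finset (Fin m)} {e : Fin m} (he : e ∈ S) :
    edgeAdj src tgt S (src e) (tgt e) :=
  ⟨e, he, .inl ⟨rfl, rfl⟩⟩

theorem eq_of_reflTransGen_edgeAdj {β : Type*} {S : Finset (Fin m)} {f : Fin (n + 1) → β}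
    (hf : ∀ e ∈ S, f (src e) = f (tgt e)) {a b : Fin (n + 1)}
    (hab : ReflTransGen (edgeAdj src tgt S) a b) : f a = f b := by
  induction hab with
  | refl => rfl
  | tail _ hbc ih =>
    obtain ⟨e, he, ⟨rfl, rfl⟩ | ⟨rfl, rfl⟩⟩ := hbc
    exacts [ih.trans (hf e he), ih.trans (hf e he).symm]

theorem ConnWithin.reflTransGen {S : Finset (Fin m)} {V : Finset (Fin (n + 1))}
    (hV : ConnWithin src tgt S V) {a b : Fin (n + 1)} (ha : a ∈ V) (hb : b ∈ V) :
    ReflTransGen (edgeAdj src tgt S) a b :=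
  ReflTransGen.mono (fun _ _ h => h.2.2) _ _ (hV a ha b hb)

instance (S : Finset (Fin m)) : Std.Symm (edgeAdj src tgt S) :=
  ⟨fun _ _ ⟨e, he, h⟩ => ⟨e, he, h.symm⟩⟩

theorem connWithin_of_forall_mem_iff {S : Finset (Fin m)} {V : Finset (Fin (n + 1))}
    {r : Fin (n + 1)} (hV : ∀ w, w ∈ V ↔ ReflTransGen (edgeAdj src tgt S) w r) :
    ConnWithin src tgt S V := by
  have hto : ∀ a, ReflTransGen (edgeAdj src tgt S) a r →
      ReflTransGen (fun x y => x ∈ V ∧ y ∈ V ∧ edgeAdj src tgt S x y) a r ∧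
      ReflTransGen (fun x y => x ∈ V ∧ y ∈ V ∧ edgeAdj src tgt S x y) r a := fun a ha => by
    induction ha using ReflTransGen.head_induction_on with
    | refl => exact ⟨.refl, .refl⟩
    | head hac hcr ih =>
      have haV := (hV _).2 (hcr.head hac)
      have hcV := (hV _).2 hcr
      exact ⟨ih.1.head ⟨haV, hcV, hac⟩, ih.2.tail ⟨hcV, haV, Std.Symm.symm _ _ hac⟩⟩
  intro a ha b hb
  exact (hto a ((hV a).1 ha)).1.trans (hto b ((hV b).1 hb)).2

end Incidence

section ParentEdges

variable {src tgt : Fin m → Fin (n + 1)}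

variable (src tgt) in
def IsParentEdge (ht : Fin (n + 1) → ℕ) (e : Fin m) (v : Fin (n + 1)) : Prop :=
  incMat src tgt v e ≠ 0 ∧ ∀ w ≠ v, incMat src tgt w e ≠ 0 → ht w < ht v

theorem IsParentEdge.unique {ht : Fin (n + 1) → ℕ} {e : Fin m} {u v : Fin (n + 1)}
    (hu : IsParentEdge src tgt ht e u) (hv : IsParentEdge src tgt ht e v) : u = v := by
  by_contra huv
  exact lt_asymm (hv.2 u huv hu.1) (hu.2 v (Ne.symm huv) hv.1)

theorem exists_isParentEdge {S : Finset (Fin m)} {P : Fin (n + 1) → Prop}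
    (h : ∀ v, ∃ w, P w ∧ ReflTransGen (edgeAdj src tgt S) v w) :
    ∃ ht : Fin (n + 1) → ℕ, ∀ v, ¬ P v → ∃ e ∈ S, IsParentEdge src tgt ht e v := by
  obtain ⟨ht, hht⟩ := exists_height_of_forall_reflTransGen h
  refine ⟨ht, fun v hv => ?_⟩
  obtain ⟨c, ⟨e, he, hvc⟩, hlt⟩ := hht v hv
  refine ⟨e, he, incMat_ne_zero_iff.2 (hvc.imp And.left And.right), fun w hwv hw => ?_⟩
  have hwc : w = c := by
    rcases incMat_ne_zero_iff.1 hw with hw | hw <;> rcases hvc with ⟨h1, h2⟩ | ⟨h1, h2⟩ <;>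
      grind
  exact hwc ▸ hlt

theorem card_le_card_of_forall_reflTransGen {S : Finset (Fin m)} {r : Fin (n + 1)}
    (h : ∀ v, ReflTransGen (edgeAdj src tgt S) v r) : n ≤ #S := by
  obtain ⟨ht, hpar⟩ := exists_isParentEdge (P := (· = r)) fun v => ⟨r, rfl, h v⟩
  choose pe hpeS hpe using fun v : {v // v ≠ r} => hpar v.1 v.2
  have hinj : Function.Injective fun v => (⟨pe v, hpeS v⟩ : S) := fun u v huv => by
    have hpeuv : pe u = pe v := congrArg Subtype.val huv
    exact Subtype.ext ((hpe u).unique (hpeuv ▸ hpe v))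
  simpa using Fintype.card_le_of_injective _ hinj

end ParentEdges

section ReducedIncidence

variable {src tgt : Fin m → Fin (n + 2)}

variable (src tgt) in
def incMinor (c : Fin n → Fin m) (r : Fin (n + 1)) : Matrix (Fin n) (Fin n) ℝ :=
  (incMat src tgt).submatrix (Fin.castSucc ∘ r.succAbove) c

theorem det_incMinor_eq_zero_of_closed (hsimple : ∀ e, src e ≠ tgt e) (c : Fin n → Fin m)
    (r : Fin (n + 1)) {W : Finset (Fin (n + 2))} (hW : W.Nonempty) (hrW : r.castSucc ∉ W)
    (hlW : Fin.last (n + 1) ∉ W) (hc : ∀ b, src (c b) ∈ W ↔ tgt (c b) ∈ W) :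
    (incMinor src tgt c r).det = 0 := by
  classical
  let g : Fin (n + 2) → ℝ := fun v => if v ∈ W then 1 else 0
  refine exists_vecMul_eq_zero_iff.1 ⟨fun a => g (r.succAbove a).castSucc, fun h0 => ?_, ?_⟩
  · obtain ⟨w, hw⟩ := hW
    obtain ⟨w, rfl⟩ := Fin.exists_castSucc_eq.2 (ne_of_mem_of_not_mem hw hlW)
    obtain ⟨a, rfl⟩ := Fin.exists_succAbove_eq fun h : w = r => hrW (h ▸ hw)
    simpa [g, hw] using congrFun h0 a
  · funext b
    have hsum := sum_mul_incMat (hsimple (c b)) g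
    rw [Fin.sum_univ_castSucc, Fin.sum_univ_succAbove _ r] at hsum
    by_cases hb : src (c b) ∈ W <;>
      simp_all [g, vecMul, dotProduct, incMinor]

def minorPotential (src tgt : Fin m → Fin (n + 2)) (c : Fin n → Fin m) : Fin (n + 2) → ℝ :=
  Fin.lastCases 0 fun r => (-1) ^ (r : ℕ) * (incMinor src tgt c r).det

theorem minorPotential_src_eq_tgt (hsimple : ∀ e, src e ≠ tgt e) (c : Fin n → Fin m)
    (b : Fin n) : minorPotential src tgt c (src (c b)) = minorPotential src tgt c (tgt (c b)) := by
  have hcof := sum_neg_one_pow_mul_det_submatrix_succAbove_mul_eq_zero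
    ((incMat src tgt).submatrix Fin.castSucc c) b
  rw [← sub_eq_zero, ← sum_mul_incMat (hsimple (c b)), Fin.sum_univ_castSucc]
  simp only [minorPotential, Fin.lastCases_last, Fin.lastCases_castSucc, zero_mul, add_zero]
  exact hcof

theorem det_incMinor_sq_eq_one {S : Finset (Fin m)} (h : #S = n) (r : Fin (n + 1))
    (hreach : ∀ v, ReflTransGen (edgeAdj src tgt S) v r.castSucc ∨
      ReflTransGen (edgeAdj src tgt S) v (Fin.last (n + 1))) :
    (incMinor src tgt (S.orderEmbOfFin h) r).det ^ 2 = 1 := by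
  set e := S.orderEmbOfFin h
  set ρ : Fin n → Fin (n + 2) := Fin.castSucc ∘ r.succAbove
  have hρ : Function.Injective ρ := (Fin.castSucc_injective _).comp Fin.succAbove_right_injective
  obtain ⟨ht, hpar⟩ := exists_isParentEdge (P := fun v => v = r.castSucc ∨ v = Fin.last (n + 1))
    fun v => (hreach v).elim (fun h => ⟨_, .inl rfl, h⟩) fun h => ⟨_, .inr rfl, h⟩
  have hρroot : ∀ a, ¬ (ρ a = r.castSucc ∨ ρ a = Fin.last (n + 1)) := fun a => by
    simp [ρ, Fin.succAbove_ne, (Fin.castSucc_lt_last _).ne]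
  choose pe hpeS hpe using fun a => hpar (ρ a) (hρroot a)
  choose σ hσ using fun a => show pe a ∈ Set.range e by rw [range_orderEmbOfFin]; exact hpeS a
  have hσinj : Function.Injective σ := fun a b hab =>
    hρ ((hpe a).unique (by rw [← hσ a, hab, hσ b]; exact hpe b))
  let τ := Equiv.ofBijective σ (Finite.injective_iff_bijective.mp hσinj)
  have hentry : ∀ a b, (incMinor src tgt e r).submatrix id τ a b = incMat src tgt (ρ a) (pe b) :=
    fun a b => by simp [incMinor, τ, ρ, hσ]
  have hdiag := det_eq_prod_diag_of_offDiag_lt ((incMinor src tgt e r).submatrix id τ) (ht ∘ ρ)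
    fun a b hab hne => (hpe b).2 (ρ a) (hρ.ne hab) (hentry a b ▸ hne)
  rw [det_permute'] at hdiag
  calc (incMinor src tgt e r).det ^ 2 = ((Perm.sign τ : ℝ) * (incMinor src tgt e r).det) ^ 2 := by
        rcases Int.units_eq_one_or (Perm.sign τ) with hs | hs <;> simp [hs]
    _ = 1 := by
        rw [hdiag, ← prod_pow]
        exact prod_eq_one fun a _ => hentry a a ▸ incMat_sq_of_ne_zero (hpe a).1

theorem reflTransGen_of_det_incMinor_ne_zero (hsimple : ∀ e, src e ≠ tgt e)
    {S : Finset (Fin m)} {c : Fin n → Fin m} (hc : ∀ b, c b ∈ S) {r : Fin (n + 1)}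
    (hdet : (incMinor src tgt c r).det ≠ 0) (v : Fin (n + 2)) :
    ReflTransGen (edgeAdj src tgt S) v r.castSucc ∨
      ReflTransGen (edgeAdj src tgt S) v (Fin.last (n + 1)) := by
  classical
  by_contra! hv
  refine hdet (det_incMinor_eq_zero_of_closed hsimple c r
    (W := univ.filter (ReflTransGen (edgeAdj src tgt S) v)) ⟨v, mem_filter.2 ⟨mem_univ _, .refl⟩⟩
    (by simpa using hv.1) (by simpa using hv.2) fun b => ?_)
  simp only [mem_filter, mem_univ, true_and]
  exact ⟨fun h => h.tail (edgeAdj_of_mem (hc b)),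
    fun h => h.tail (Std.Symm.symm _ _ (edgeAdj_of_mem (hc b)))⟩

theorem det_incMinor_mul_det_incMinor_of_isSpanningForest2 (hsimple : ∀ e, src e ≠ tgt e)
    {S : Finset (Fin m)} (h : #S = n) {i j : Fin (n + 1)}
    (hf : IsSpanningForest2 src tgt S {i.castSucc, j.castSucc} {Fin.last (n + 1)}) :
    (incMinor src tgt (S.orderEmbOfFin h) i).det * (incMinor src tgt (S.orderEmbOfFin h) j).det
      = (-1) ^ ((i : ℕ) + (j : ℕ)) := by
  obtain ⟨V1, V2, -, hunion, -, -, hN1, hN2, -, -, hc1, hc2⟩ := hf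
  have hi : i.castSucc ∈ V1 := hN1 (by simp)
  have hj : j.castSucc ∈ V1 := hN1 (by simp)
  have hl : Fin.last (n + 1) ∈ V2 := hN2 (by simp)
  have hsq := det_incMinor_sq_eq_one h i fun v => (mem_union.1 (hunion ▸ mem_univ v)).imp
    (fun hv => hc1.reflTransGen hv hi) fun hv => hc2.reflTransGen hv hl
  have hx := eq_of_reflTransGen_edgeAdj (f := minorPotential src tgt (S.orderEmbOfFin h))
    (fun e he => ?_) (hc1.reflTransGen hi hj)
  · simp only [minorPotential, Fin.lastCases_castSucc] at hx
    have hsj : ((-1 : ℝ) ^ (j : ℕ)) ^ 2 = 1 := by rw [← pow_mul, mul_comm, pow_mul]; simp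
    linear_combination (-(-1 : ℝ) ^ (j : ℕ) * (incMinor src tgt (S.orderEmbOfFin h) i).det) * hx
      + ((-1 : ℝ) ^ (i : ℕ) * (-1) ^ (j : ℕ)) * hsq
      - (incMinor src tgt (S.orderEmbOfFin h) i).det
        * (incMinor src tgt (S.orderEmbOfFin h) j).det * hsj
  · obtain ⟨b, rfl⟩ : e ∈ Set.range (S.orderEmbOfFin h) := by rwa [range_orderEmbOfFin]
    exact minorPotential_src_eq_tgt hsimple _ b

theorem isSpanningForest2_of_det_incMinor_mul_ne_zero (hsimple : ∀ e, src e ≠ tgt e)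
    {S : Finset (Fin m)} (h : #S = n) {i j : Fin (n + 1)}
    (hd : (incMinor src tgt (S.orderEmbOfFin h) i).det
      * (incMinor src tgt (S.orderEmbOfFin h) j).det ≠ 0) :
    IsSpanningForest2 src tgt S {i.castSucc, j.castSucc} {Fin.last (n + 1)} := by
  classical
  set R := ReflTransGen (edgeAdj src tgt S)
  have hi := reflTransGen_of_det_incMinor_ne_zero hsimple (S.orderEmbOfFin_mem h)
    (left_ne_zero_of_mul hd)
  have hj := reflTransGen_of_det_incMinor_ne_zero hsimple (S.orderEmbOfFin_mem h)
    (right_ne_zero_of_mul hd)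
  -- a spanning tree on `n + 2` nodes would need `n + 1 > #S` edges
  have hnot : ∀ r : Fin (n + 1), (∀ v, R v r.castSucc ∨ R v (Fin.last (n + 1))) →
      ¬ R r.castSucc (Fin.last (n + 1)) := fun r hr hrl => by
    have := card_le_card_of_forall_reflTransGen fun v => (hr v).elim (·.trans hrl) id
    omega
  have hil := hnot i hi
  have hji : R j.castSucc i.castSucc := (hi j.castSucc).resolve_right (hnot j hj)
  refine ⟨univ.filter (R · i.castSucc), univ.filter (R · (Fin.last (n + 1))), ?_, ?_,
    ⟨i.castSucc, by simp [R, ReflTransGen.refl]⟩,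
    ⟨Fin.last (n + 1), by simp [R, ReflTransGen.refl]⟩, ?_, by simp [R, ReflTransGen.refl],
    by omega, fun e he => ?_,
    connWithin_of_forall_mem_iff (r := i.castSucc) (by simp [R]),
    connWithin_of_forall_mem_iff (r := Fin.last (n + 1)) (by simp [R])⟩
  · exact disjoint_filter.2 fun w _ hwi hwl => hil ((Std.Symm.symm _ _ hwi).trans hwl)
  · ext v
    simp only [mem_union, mem_filter, mem_univ, true_and, iff_true]
    exact hi v
  · simp [insert_subset_iff, R, hji, ReflTransGen.refl]
  · have hst := edgeAdj_of_mem (src := src) (tgt := tgt) he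
    by_cases hs : R (src e) i.castSucc
    · exact .inl (by simpa using ⟨hs, hs.head (Std.Symm.symm _ _ hst)⟩)
    · have ht : ¬ R (tgt e) i.castSucc := fun ht => hs (ht.head hst)
      exact .inr (by simpa using ⟨(hi _).resolve_left hs, (hi _).resolve_left ht⟩)

open Classical in
theorem det_incMinor_mul_det_incMinor (hsimple : ∀ e, src e ≠ tgt e) {S : Finset (Fin m)}
    (h : #S = n) (i j : Fin (n + 1)) :
    (incMinor src tgt (S.orderEmbOfFin h) i).det * (incMinor src tgt (S.orderEmbOfFin h) j).det
      = if IsSpanningForest2 src tgt S {i.castSucc, j.castSucc} {Fin.last (n + 1)} then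
          (-1) ^ ((i : ℕ) + (j : ℕ)) else 0 := by
  split_ifs with hf
  · exact det_incMinor_mul_det_incMinor_of_isSpanningForest2 hsimple h hf
  · exact not_not.1 fun hd => hf (isSpanningForest2_of_det_incMinor_mul_ne_zero hsimple h hd)

end ReducedIncidence

theorem submatrix_lap (src tgt : Fin m → Fin (n + 1)) (B : Fin m → ℝ) {k : ℕ}
    (f g : Fin k → Fin (n + 1)) :
    (lap src tgt B).submatrix f g
      = (incMat src tgt).submatrix f id * diagonal B * ((incMat src tgt).submatrix g id)ᵀ := by
  rw [lap, submatrix_mul _ _ _ id _ Function.bijective_id,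
    submatrix_mul _ _ _ id _ Function.bijective_id]
  rfl

theorem all_minors_matrix_tree_theorem_general
    (src tgt : Fin m → Fin (n + 2)) (B : Fin m → ℝ)
    (hsimple : ∀ e, src e ≠ tgt e)
    (i j : Fin (n + 1)) :
    ((rlap src tgt B).submatrix i.succAbove j.succAbove).det
      = (-1 : ℝ) ^ ((i : ℕ) + (j : ℕ)) *
        forestSum src tgt B {i.castSucc, j.castSucc} {Fin.last (n + 1)} := by
  classical
  rw [rlap, submatrix_submatrix, submatrix_lap, det_mul_diagonal_mul_transpose_eq_sum, forestSum,
    sum_filter, mul_sum]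
  refine sum_congr rfl fun S _ => ?_
  by_cases hS : #S = n
  · have hminor : ∀ r : Fin (n + 1), ((incMat src tgt).submatrix (Fin.castSucc ∘ r.succAbove)
        id).submatrix id (S.orderEmbOfFin hS) = incMinor src tgt (S.orderEmbOfFin hS) r :=
      fun _ => rfl
    rw [dif_pos hS, hminor, hminor, mul_assoc, det_incMinor_mul_det_incMinor hsimple hS i j]
    split_ifs <;> ring
  · have hf : ¬ IsSpanningForest2 src tgt S {i.castSucc, j.castSucc} {Fin.last (n + 1)} :=
      fun ⟨_, _, _, _, _, _, _, _, hcard, _⟩ => hS (by omega)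
    rw [dif_neg hS, if_neg hf, mul_zero]

/-- **All-minors Matrix Tree Theorem.**
Deleting row `i` and column `j` from the reduced Laplacian of a connected graph (on
`n + 2` nodes, reference node `Fin.last (n+1)`) gives a matrix whose determinant is
`(−1)^{i+j}` times the total weight of two-tree spanning forests separating `{i, j}`
from the reference node. -/
theorem all_minors_matrix_tree_theorem
    (src tgt : Fin m → Fin (n + 2)) (B : Fin m → ℝ)
    (hB : ∀ e, 0 < B e)
    (hsimple : ∀ e, src e ≠ tgt e)
    (hconn : ConnectedOn src tgt Finset.univ)
    (i j : Fin (n + 1)) :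
    ((rlap src tgt B).submatrix i.succAbove j.succAbove).det
      = (-1 : ℝ) ^ ((i : ℕ) + (j : ℕ)) *
        forestSum src tgt B {i.castSucc, j.castSucc} {Fin.last (n + 1)} :=
  all_minors_matrix_tree_theorem_general src tgt B hsimple i j
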